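/- Let C = ⟨(b|0), (ℓ | fh + 2f)⟩ be a Z_2Z_4-additive cyclic code with fhg = x^β - 1 in Z_4[x], β odd, and b | x^α - 1 in Z_2[x], where b divides ((x^β-1)/f)·ℓ mod 2. Then b divides ((x^β-1)/f)·gcd(b, ℓ) mod 2 and b divides h·gcd(b, ℓg) mod 2 (computations in Z_2[x], with f, g, h reduced mod 2). -/

import Mathlib

open Polynomial

/-- Reduction modulo 2, `Z₄[x] → Z₂[x]`. -/
noncomputable def red42 : Polynomial (ZMod 4) →+* Polynomial (ZMod 2) :=
  Polynomial.mapRingHom (ZMod.castHom (show 2 ∣ 4 by norm_num) (ZMod 2))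

namespace EuclideanDomain

theorem dvd_mul_gcd_of_dvd_mul {R : Type*} [EuclideanDomain R] [DecidableEq R] {a c x : R}
    (h : a ∣ c * x) : a ∣ c * gcd a x := by
  rw [gcd_eq_gcd_ab, mul_add, ← mul_assoc c x]
  exact dvd_add ((dvd_mul_right a _).mul_left c) (h.mul_right _)

end EuclideanDomain

theorem b_dvd_gcd_conditions
    (g h : Polynomial (ZMod 4))
    (b ℓ : Polynomial (ZMod 2))
    (hdvd : b ∣ red42 (h * g) * ℓ) :
    b ∣ red42 (h * g) * EuclideanDomain.gcd b ℓ ∧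
      b ∣ red42 h * EuclideanDomain.gcd b (ℓ * red42 g) := by
  refine ⟨EuclideanDomain.dvd_mul_gcd_of_dvd_mul hdvd,
    EuclideanDomain.dvd_mul_gcd_of_dvd_mul ?_⟩
  rwa [map_mul, mul_assoc, mul_comm (red42 g)] at hdvd
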